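/- Let K ≥ 1 and suppose a sequence of symmetric matrices Ŵ^{(k)} ∈ ℝ^{K×K}, k = 1,…,K, is built as Ŵ^{(k)} = Σ_{m=1}^k W_m where each W_m is symmetric positive semidefinite, the upper-left 1×1 block of Ŵ^{(1)} is positive, and at each step k either the upper-left (k+1)×(k+1) block of Ŵ^{(k)} is already positive definite, or W_{k+1} is strictly positive on the one-dimensional kernel of that block. If at each step the upper-left k×k block of Ŵ^{(k)} is positive definite, then the upper-left (k+1)×(k+1) block of Ŵ^{(k+1)} is positive definite; in particular Ŵ^{(K)} is positive definite. -/

import Mathlib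

open scoped Matrix

/-!
Write `Ŝₖ` for the leading `(k+1) × (k+1)` block of the partial sum `Shat k`, so that the
corresponding block of `Shat (k+1)` is `Ŝₖ + Wₖ` with both summands positive semidefinite. For
positive semidefinite `A`, `x⋆ A x = 0` forces `A x = 0`; hence `x⋆ (A + B) x` can only vanish on
the kernel of `A`, and there `B` is strictly positive by assumption (when `Ŝₖ` is itself positive
definite there is nothing to prove).
-/

namespace Matrix.PosSemidef

open scoped ComplexOrder

variable {n 𝕜 : Type*} [Fintype n] [RCLike 𝕜]

theorem add_posDef_of_pos_on_ker {A B : Matrix n n 𝕜} (hA : A.PosSemidef) (hB : B.PosSemidef)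
    (hker : ∀ x : n → 𝕜, x ≠ 0 → A *ᵥ x = 0 → 0 < star x ⬝ᵥ (B *ᵥ x)) :
    (A + B).PosDef := by
  refine PosDef.of_dotProduct_mulVec_pos (hA.1.add hB.1) fun x hx => ?_
  rw [add_mulVec, dotProduct_add]
  rcases (hA.dotProduct_mulVec_nonneg x).lt_or_eq with hpos | hzero
  · exact add_pos_of_pos_of_nonneg hpos (hB.dotProduct_mulVec_nonneg x)
  · rw [← hzero, zero_add]
    exact hker x hx ((hA.dotProduct_mulVec_zero_iff x).mp hzero.symm)

end Matrix.PosSemidef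

theorem Fin.sum_filter_val_lt_succ {M : Type*} [AddCommMonoid M] {K : ℕ} (f : Fin K → M)
    (k : ℕ) (hk : k < K) :
    ∑ m ∈ Finset.univ.filter (fun m : Fin K => (m : ℕ) < k + 1), f m
      = ∑ m ∈ Finset.univ.filter (fun m : Fin K => (m : ℕ) < k), f m + f ⟨k, hk⟩ := by
  have hsplit : Finset.univ.filter (fun m : Fin K => (m : ℕ) < k + 1)
      = insert ⟨k, hk⟩ (Finset.univ.filter (fun m : Fin K => (m : ℕ) < k)) := by
    ext m
    simp only [Finset.mem_filter, Finset.mem_univ, true_and, Finset.mem_insert, Fin.ext_iff]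
    omega
  rw [hsplit, Finset.sum_insert (by simp), add_comm]

theorem stmt_4_general (K : ℕ) (hK : 1 ≤ K) (W : Fin K → Matrix (Fin K) (Fin K) ℝ)
    (hPSD : ∀ m, (W m).PosSemidef)
    (Shat : ℕ → Matrix (Fin K) (Fin K) ℝ)
    (hShat : ∀ k, Shat k = ∑ m ∈ Finset.univ.filter (fun m : Fin K => (m : ℕ) < k), W m)
    (hstep : ∀ (k : ℕ) (hk : k + 1 ≤ K),
      ((Shat k).submatrix (Fin.castLE hk) (Fin.castLE hk)).PosDef ∨
      (∀ v : Fin (k + 1) → ℝ, v ≠ 0 →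
        (Shat k).submatrix (Fin.castLE hk) (Fin.castLE hk) *ᵥ v = 0 →
        0 < v ⬝ᵥ ((W ⟨k, hk⟩).submatrix (Fin.castLE hk) (Fin.castLE hk) *ᵥ v))) :
    (∀ (k : ℕ) (hk : k ≤ K), 1 ≤ k →
      ((Shat k).submatrix (Fin.castLE hk) (Fin.castLE hk)).PosDef)
    ∧ (Shat K).PosDef := by
  have hblock : ∀ (k : ℕ) (hk : k ≤ K), 1 ≤ k →
      ((Shat k).submatrix (Fin.castLE hk) (Fin.castLE hk)).PosDef := by
    rintro (_ | k) hk hk1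
    · omega
    have hsucc : Shat (k + 1) = Shat k + W ⟨k, hk⟩ := by
      rw [hShat, hShat, Fin.sum_filter_val_lt_succ]
    have hSpsd : (Shat k).PosSemidef := hShat k ▸ Matrix.posSemidef_sum _ fun m _ => hPSD m
    rw [hsucc, Matrix.submatrix_add]
    rcases hstep k hk with hpd | hker
    · exact hpd.add_posSemidef ((hPSD _).submatrix _)
    · exact (hSpsd.submatrix _).add_posDef_of_pos_on_ker ((hPSD _).submatrix _)
        (by simpa using hker)
  exact ⟨hblock, by simpa using hblock K le_rfl hK⟩

/-- Inductive mechanism of the greedy reconstruction algorithm: given symmetric PSD summands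
`W m` with partial sums `Shat k = ∑_{m<k} W m`, a positive initial `1×1` block, and at each
step either the `(k+1)×(k+1)` block of `Shat k` already PD or `W (k+1)` strictly positive on
the kernel of that block, all leading blocks of the partial sums are PD; in particular
`Shat K` is PD. -/
theorem stmt_4 (K : ℕ) (hK : 1 ≤ K) (W : Fin K → Matrix (Fin K) (Fin K) ℝ)
    (hPSD : ∀ m, (W m).PosSemidef)
    (Shat : ℕ → Matrix (Fin K) (Fin K) ℝ)
    (hShat : ∀ k, Shat k = ∑ m ∈ Finset.univ.filter (fun m : Fin K => (m : ℕ) < k), W m)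
    (h1 : 0 < Shat 1 ⟨0, hK⟩ ⟨0, hK⟩)
    (hstep : ∀ (k : ℕ) (hk : k + 1 ≤ K),
      ((Shat k).submatrix (Fin.castLE hk) (Fin.castLE hk)).PosDef ∨
      (∀ v : Fin (k + 1) → ℝ, v ≠ 0 →
        (Shat k).submatrix (Fin.castLE hk) (Fin.castLE hk) *ᵥ v = 0 →
        0 < v ⬝ᵥ ((W ⟨k, hk⟩).submatrix (Fin.castLE hk) (Fin.castLE hk) *ᵥ v))) :
    (∀ (k : ℕ) (hk : k ≤ K), 1 ≤ k →
      ((Shat k).submatrix (Fin.castLE hk) (Fin.castLE hk)).PosDef)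
    ∧ (Shat K).PosDef :=
  stmt_4_general K hK W hPSD Shat hShat hstep
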